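/- For every integer n ≥ 1 and every finite subset A of Ω: W_A is a Sym(Ω∖A)-invariant subspace of Im β*_{n,n-1}, closed in the product topology and of finite index in Im β*_{n,n-1}; moreover every F_2-subspace W of Im β*_{n,n-1} that is Sym(Ω∖A)-invariant, closed in the product topology, and of finite index in Im β*_{n,n-1} contains W_A. Hence W_A is the unique minimal closed Sym(Ω∖A)-submodule of Im β*_{n,n-1} of finite index. -/

import Mathlib

/-!
`V_A` is exactly the space of functions vanishing on the finitely many `(n-1)`-subsets of `A`.
So it is compact and of finite codimension, and it is stable under `Sym(Ω∖A)`; as `β*` is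
continuous and equivariant, `W_A = β*(V_A)` inherits closedness, finite index and invariance.

For minimality, a closed subgroup of finite index is open, so `W` contains every element of
`Im β*` vanishing on some finite set `S` of `n`-sets. Write `g ∈ V_A` as a finite combination of
point masses `δ_w` with `w ⊄ A` plus a function vanishing on all `(n-1)`-subsets of members
of `S`. For `β* δ_w`, a transposition fixing `A` that moves a point of `w ∖ A` off every member
of `S` turns it into a function vanishing on `S`; invariance of `W` brings it back.
-/

/-- The set of `m`-element subsets of `Ω`. -/
abbrev NSubsets (Ω : Type*) (m : ℕ) := {s : Finset Ω // s.card = m}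

/-- The dual map `β*_{m,j} : F₂^{[Ω]^j} → F₂^{[Ω]^m}`,
`(β*_{m,j} f)(ω) = Σ_{x ∈ [ω]^j} f(x)`. -/
noncomputable def betaStar (Ω : Type*) (m j : ℕ) :
    (NSubsets Ω j → ZMod 2) →ₗ[ZMod 2] (NSubsets Ω m → ZMod 2) where
  toFun f := fun ω => ∑ x ∈ (Finset.powersetCard j ω.1).attach,
      f ⟨x.1, (Finset.mem_powersetCard.mp x.2).2⟩
  map_add' f g := by
    funext ω
    simp [Finset.sum_add_distrib]
  map_smul' c f := by
    funext ω
    simp [Finset.mul_sum, smul_eq_mul]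

/-- The map `β_{m,j} : F₂[Ω]^m → F₂[Ω]^j` on the free modules, sending a basis
element `ω ∈ [Ω]^m` to `Σ_{ω' ∈ [ω]^j} ω'`. -/
noncomputable def beta (Ω : Type*) (m j : ℕ) :
    (NSubsets Ω m →₀ ZMod 2) →ₗ[ZMod 2] (NSubsets Ω j →₀ ZMod 2) :=
  Finsupp.lsum (ZMod 2) fun ω =>
    ∑ x ∈ (Finset.powersetCard j ω.1).attach,
      Finsupp.lsingle ⟨x.1, (Finset.mem_powersetCard.mp x.2).2⟩

/-- The natural action of a permutation of `Ω` on `m`-element subsets of `Ω`. -/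
def permImage {Ω : Type*} [DecidableEq Ω] (σ : Equiv.Perm Ω) {n : ℕ}
    (w : NSubsets Ω n) : NSubsets Ω n :=
  ⟨w.1.image σ, by rw [Finset.card_image_of_injective _ σ.injective, w.2]⟩

/-- `V_{B,A}`: functions on `[Ω]^{n-1}` vanishing at every `w` with `w ∩ A ≠ B`. -/
def VBA (Ω : Type*) [DecidableEq Ω] (n : ℕ) (A B : Finset Ω) :
    Submodule (ZMod 2) (NSubsets Ω (n - 1) → ZMod 2) where
  carrier := {f | ∀ w : NSubsets Ω (n - 1), w.1 ∩ A ≠ B → f w = 0}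
  add_mem' := by
    intro f g hf hg w hw
    simp only [Pi.add_apply, hf w hw, hg w hw, add_zero]
  zero_mem' := fun w _ => rfl
  smul_mem' := by
    intro c f hf w hw
    simp only [Pi.smul_apply, hf w hw, smul_zero]

/-- `V_A`: the sum of the subspaces `V_{B,A}` over `B ⊆ A` with `|B| < n - 1`. -/
def VA (Ω : Type*) [DecidableEq Ω] (n : ℕ) (A : Finset Ω) :
    Submodule (ZMod 2) (NSubsets Ω (n - 1) → ZMod 2) :=
  ⨆ B ∈ {B : Finset Ω | B ⊆ A ∧ B.card < n - 1}, VBA Ω n A B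

/-- `W_A = β*_{n,n-1}(V_A)`. -/
noncomputable def WA (Ω : Type*) [DecidableEq Ω] (n : ℕ) (A : Finset Ω) :
    Submodule (ZMod 2) (NSubsets Ω n → ZMod 2) :=
  (VA Ω n A).map (betaStar Ω n (n - 1))

instance : TopologicalSpace (ZMod 2) := ⊥
instance : DiscreteTopology (ZMod 2) := ⟨rfl⟩

open Finset

section Topology

variable {ι R : Type*} [Ring R] [TopologicalSpace R]

theorem Submodule.isClosed_pi_bot [T1Space R] (I : Set ι) :
    IsClosed ((Submodule.pi I fun _ => ⊥ : Submodule R (ι → R)) : Set (ι → R)) := by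
  rw [Submodule.coe_pi]
  exact isClosed_set_pi fun _ _ => isClosed_singleton

theorem Submodule.exists_finset_forall_eq_zero_imp_mem [DiscreteTopology R]
    {P W : Submodule R (ι → R)} (hW : IsClosed (W : Set (ι → R)))
    [Finite (P ⧸ W.comap P.subtype)] :
    ∃ S : Finset ι, ∀ f ∈ P, (∀ i ∈ S, f i = 0) → f ∈ W := by
  let W' := (W.comap P.subtype).toAddSubgroup
  have : W'.FiniteIndex := @AddSubgroup.finiteIndex_of_finite_quotient _ _ _
    (inferInstanceAs (Finite (P ⧸ W.comap P.subtype)))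
  have hopen : IsOpen (W' : Set P) :=
    W'.isOpen_of_isClosed_of_finiteIndex (hW.preimage continuous_subtype_val)
  obtain ⟨U, hU, hUW⟩ := isOpen_induced_iff.mp hopen
  obtain ⟨S, u, hu, hSU⟩ := isOpen_pi_iff.mp hU 0 (hUW.symm.subset W'.zero_mem)
  refine ⟨S, fun f hf hfS => ?_⟩
  have hfU : f ∈ U := hSU fun i hi => by simpa [hfS i hi] using (hu i hi).2
  exact hUW.subset (show (⟨f, hf⟩ : P) ∈ Subtype.val ⁻¹' U from hfU)

end Topology

section FiniteQuotient

variable {R M N : Type*} [Ring R] [AddCommGroup M] [Module R M] [AddCommGroup N] [Module R N]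

theorem Submodule.finite_quotient_map_comap_range (φ : M →ₗ[R] N) (V : Submodule R M)
    [Finite (M ⧸ V)] :
    Finite (LinearMap.range φ ⧸ (V.map φ).comap (LinearMap.range φ).subtype) := by
  let Q := (V.map φ).comap (LinearMap.range φ).subtype
  have hV : V ≤ LinearMap.ker (Q.mkQ ∘ₗ φ.rangeRestrict) := fun x hx => by
    simpa [Q] using Submodule.mem_map_of_mem (f := φ) hx
  refine Finite.of_surjective (V.liftQ _ hV) (LinearMap.range_eq_top.mp ?_)
  rw [Submodule.range_liftQ, LinearMap.range_eq_top]
  exact Q.mkQ_surjective.comp φ.surjective_rangeRestrict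

theorem Submodule.finite_quotient_pi_bot [Finite R] {ι : Type*} {I : Set ι} (hI : I.Finite) :
    Finite ((ι → R) ⧸ Submodule.pi I fun _ => (⊥ : Submodule R R)) := by
  have : Finite I := hI.to_subtype
  have hker : (Submodule.pi I fun _ => ⊥) =
      LinearMap.ker (LinearMap.funLeft R R ((↑) : I → ι)) := by
    ext f
    simp [funext_iff]
  rw [hker]
  exact Finite.of_equiv _ (LinearMap.quotKerEquivRange _).symm.toEquiv

end FiniteQuotient

variable {Ω : Type*} {m j : ℕ}

section Beta

theorem betaStar_apply (f : NSubsets Ω j → ZMod 2) (ω : NSubsets Ω m) :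
    betaStar Ω m j f ω = ∑ x ∈ (powersetCard j ω.1).attach,
      f ⟨x.1, (mem_powersetCard.mp x.2).2⟩ := rfl

theorem continuous_betaStar : Continuous (betaStar Ω m j) :=
  continuous_pi fun _ => continuous_finsetSum _ fun _ _ => continuous_apply _

theorem betaStar_apply_eq_zero {f : NSubsets Ω j → ZMod 2} {ω : NSubsets Ω m}
    (hf : ∀ x : NSubsets Ω j, x.1 ⊆ ω.1 → f x = 0) : betaStar Ω m j f ω = 0 :=
  sum_eq_zero fun x _ => hf _ (mem_powersetCard.mp x.2).1

theorem betaStar_single [DecidableEq Ω] (w : NSubsets Ω j) (ω : NSubsets Ω m) :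
    betaStar Ω m j (Pi.single w 1) ω = if w.1 ⊆ ω.1 then 1 else 0 := by
  rw [betaStar_apply]
  simp only [Pi.single_apply, Subtype.ext_iff]
  rw [sum_attach _ (fun x => if x = w.1 then (1 : ZMod 2) else 0), sum_ite_eq']
  simp [mem_powersetCard, w.2]

end Beta

section Perm

variable [DecidableEq Ω]

theorem permImage_permImage (σ τ : Equiv.Perm Ω) (w : NSubsets Ω m) :
    permImage σ (permImage τ w) = permImage (σ * τ) w :=
  Subtype.ext (image_image ..)

theorem permImage_eq_self {σ : Equiv.Perm Ω} {w : NSubsets Ω m} (h : ∀ a ∈ w.1, σ a = a) :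
    permImage σ w = w :=
  Subtype.ext ((image_congr (g := id) h).trans image_id)

theorem permImage_one (w : NSubsets Ω m) : permImage 1 w = w :=
  permImage_eq_self fun _ _ => rfl

theorem permImage_subset_iff {σ : Equiv.Perm Ω} {v : NSubsets Ω j} {ω : NSubsets Ω m} :
    (permImage σ v).1 ⊆ ω.1 ↔ v.1 ⊆ (permImage σ⁻¹ ω).1 := by
  simp [permImage, subset_iff, Equiv.Perm.inv_def, Equiv.symm_apply_eq]

theorem mem_powersetCard_permImage {σ : Equiv.Perm Ω} {ω : NSubsets Ω m} {x : Finset Ω}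
    (hx : x ∈ powersetCard j ω.1) : x.image σ ∈ powersetCard j (permImage σ ω).1 := by
  rw [mem_powersetCard] at hx ⊢
  exact ⟨image_subset_image hx.1, (card_image_of_injective _ σ.injective).trans hx.2⟩

theorem betaStar_comp_permImage (σ : Equiv.Perm Ω) (g : NSubsets Ω j → ZMod 2)
    (ω : NSubsets Ω m) :
    betaStar Ω m j (fun w => g (permImage σ w)) ω = betaStar Ω m j g (permImage σ ω) := by
  have hback :
      ∀ y ∈ powersetCard j (permImage σ ω).1, y.image ⇑σ⁻¹ ∈ powersetCard j ω.1 :=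
    fun y hy => by
      simpa [permImage_permImage, permImage_one] using mem_powersetCard_permImage (σ := σ⁻¹) hy
  rw [betaStar_apply, betaStar_apply]
  refine sum_nbij' (fun x => ⟨x.1.image σ, mem_powersetCard_permImage x.2⟩)
    (fun y => ⟨y.1.image ⇑σ⁻¹, hback y.1 y.2⟩) (by simp) (by simp) ?_ ?_ (fun _ _ => rfl)
  all_goals intro x _; ext1; simp [image_image]

theorem betaStar_single_comp_permImage (σ : Equiv.Perm Ω) (w : NSubsets Ω j) :
    (fun ω => betaStar Ω m j (Pi.single w 1) (permImage σ⁻¹ ω)) =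
      betaStar Ω m j (Pi.single (permImage σ w) 1) := by
  funext ω
  simp only [betaStar_single, permImage_subset_iff]

end Perm

section SubspaceWA

variable [DecidableEq Ω] {n : ℕ} {A : Finset Ω}

theorem VA_eq_pi :
    VA Ω n A = Submodule.pi {w | w.1 ⊆ A} fun _ => ⊥ := by
  apply le_antisymm
  · refine iSup₂_le fun B hB g hg w hw => hg w ?_
    rw [inter_eq_left.mpr hw]
    rintro rfl
    exact hB.2.ne w.2
  · intro g hg
    let pieces := A.powerset.filter (·.card < n - 1)
    have hsplit : g = ∑ B ∈ pieces, fun w => if w.1 ∩ A = B then g w else 0 := by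
      funext w
      rw [Finset.sum_apply, sum_ite_eq]
      split_ifs with hw
      · rfl
      · have hcard : (w.1 ∩ A).card = w.1.card := by
          refine le_antisymm (card_le_card inter_subset_left) (le_of_not_gt fun h => hw ?_)
          simpa [pieces, w.2] using h
        exact hg w (by simpa using eq_of_subset_of_card_le inter_subset_left hcard.ge)
    rw [hsplit]
    refine Submodule.sum_mem _ fun B hB => ?_
    have hB' : B ⊆ A ∧ B.card < n - 1 := by simpa [pieces] using hB
    exact (le_iSup₂_of_le B hB' le_rfl : VBA Ω n A B ≤ VA Ω n A) fun w hw => if_neg hw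

theorem mem_VA {g : NSubsets Ω (n - 1) → ZMod 2} :
    g ∈ VA Ω n A ↔ ∀ w : NSubsets Ω (n - 1), w.1 ⊆ A → g w = 0 := by
  simp [VA_eq_pi]

theorem isClosed_WA : IsClosed (WA Ω n A : Set (NSubsets Ω n → ZMod 2)) := by
  rw [WA, Submodule.map_coe, VA_eq_pi]
  exact ((Submodule.isClosed_pi_bot _).isCompact.image continuous_betaStar).isClosed

theorem finite_quotient_WA :
    Finite (LinearMap.range (betaStar Ω n (n - 1)) ⧸
      (WA Ω n A).comap (LinearMap.range (betaStar Ω n (n - 1))).subtype) := by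
  have hfin : {w : NSubsets Ω (n - 1) | w.1 ⊆ A}.Finite :=
    (A.powerset.finite_toSet.preimage Subtype.val_injective.injOn).subset fun w hw => by
      simpa using hw
  have : Finite (_ ⧸ VA Ω n A) := by
    rw [VA_eq_pi]
    exact Submodule.finite_quotient_pi_bot hfin
  exact Submodule.finite_quotient_map_comap_range _ _

theorem WA_perm_invariant {σ : Equiv.Perm Ω} (hσ : ∀ a ∈ A, σ a = a)
    {f : NSubsets Ω n → ZMod 2} (hf : f ∈ WA Ω n A) :
    (fun w => f (permImage σ⁻¹ w)) ∈ WA Ω n A := by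
  obtain ⟨g, hg, rfl⟩ := hf
  refine ⟨fun w => g (permImage σ⁻¹ w), mem_VA.mpr fun w hw => ?_,
    funext (betaStar_comp_permImage σ⁻¹ g)⟩
  rw [permImage_eq_self fun a ha => ?_]
  · exact mem_VA.mp hg w hw
  · rw [Equiv.Perm.inv_eq_iff_eq, hσ a (hw ha)]

end SubspaceWA

section Minimality

variable [DecidableEq Ω] [Infinite Ω] {A : Finset Ω}
  {W : Submodule (ZMod 2) (NSubsets Ω m → ZMod 2)} {S : Finset (NSubsets Ω m)}

theorem betaStar_single_mem_of_not_subset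
    (hinv : ∀ σ : Equiv.Perm Ω, (∀ a ∈ A, σ a = a) →
      ∀ f ∈ W, (fun w => f (permImage σ⁻¹ w)) ∈ W)
    (hS : ∀ f ∈ LinearMap.range (betaStar Ω m j), (∀ s ∈ S, f s = 0) → f ∈ W)
    {w : NSubsets Ω j} (hw : ¬ w.1 ⊆ A) :
    betaStar Ω m j (Pi.single w 1) ∈ W := by
  -- Swapping `e ∈ w ∖ A` with a point `x` outside `A` and all members of `S` moves `w` to a set
  -- that no member of `S` contains.
  obtain ⟨e, hew, heA⟩ := not_subset.mp hw
  obtain ⟨x, hx⟩ := Infinite.exists_notMem_finset (A ∪ S.biUnion Subtype.val)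
  have hxA : x ∉ A := fun h => hx (mem_union_left _ h)
  let σ := Equiv.swap e x
  have hσA : ∀ a ∈ A, σ a = a := fun a ha =>
    Equiv.swap_apply_of_ne_of_ne (ne_of_mem_of_not_mem ha heA) (ne_of_mem_of_not_mem ha hxA)
  have hmoved : betaStar Ω m j (Pi.single (permImage σ⁻¹ w) 1) ∈ W := by
    refine hS _ ⟨_, rfl⟩ fun s hs => ?_
    rw [betaStar_single, if_neg]
    intro hsub
    have hxw : x ∈ (permImage σ⁻¹ w).1 := mem_image.mpr ⟨e, hew, by simp [σ]⟩
    exact hx (mem_union_right _ (mem_biUnion.mpr ⟨s, hs, hsub hxw⟩))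
  simpa [betaStar_single_comp_permImage, permImage_permImage, permImage_one] using
    hinv σ hσA _ hmoved

theorem betaStar_mem_of_forall_subset_eq_zero
    (hinv : ∀ σ : Equiv.Perm Ω, (∀ a ∈ A, σ a = a) →
      ∀ f ∈ W, (fun w => f (permImage σ⁻¹ w)) ∈ W)
    (hS : ∀ f ∈ LinearMap.range (betaStar Ω m j), (∀ s ∈ S, f s = 0) → f ∈ W)
    {g : NSubsets Ω j → ZMod 2} (hg : ∀ w : NSubsets Ω j, w.1 ⊆ A → g w = 0) :
    betaStar Ω m j g ∈ W := by
  let T : Finset (NSubsets Ω j) := (S.biUnion fun s => powersetCard j s.1).subtype (·.card = j)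
  let g₀ : NSubsets Ω j → ZMod 2 := ∑ v ∈ T, g v • Pi.single v 1
  have hg₀ : ∀ v ∈ T, g₀ v = g v := fun v hv => by simp [g₀, Pi.single_apply, hv]
  have hlocal : betaStar Ω m j g₀ ∈ W := by
    simp only [g₀, map_sum, map_smul]
    refine Submodule.sum_mem _ fun v _ => ?_
    by_cases hv : v.1 ⊆ A
    · simp [hg v hv]
    · exact W.smul_mem _ (betaStar_single_mem_of_not_subset hinv hS hv)
  have hrest : betaStar Ω m j (g - g₀) ∈ W :=
    hS _ ⟨_, rfl⟩ fun s hs => betaStar_apply_eq_zero fun x hx => by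
      have hxT : x ∈ T :=
        mem_subtype.mpr (mem_biUnion.mpr ⟨s, hs, mem_powersetCard.mpr ⟨hx, x.2⟩⟩)
      rw [Pi.sub_apply, hg₀ x hxT, sub_self]
  simpa using W.add_mem hrest hlocal

end Minimality

theorem WA_unique_minimal_general
    (Ω : Type) [Infinite Ω] [DecidableEq Ω] (n : ℕ)
    (A : Finset Ω) :
    WA Ω n A ≤ LinearMap.range (betaStar Ω n (n - 1)) ∧
    (∀ σ : Equiv.Perm Ω, (∀ a ∈ A, σ a = a) →
      ∀ f ∈ WA Ω n A, (fun w => f (permImage σ⁻¹ w)) ∈ WA Ω n A) ∧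
    IsClosed (WA Ω n A : Set (NSubsets Ω n → ZMod 2)) ∧
    Finite ((LinearMap.range (betaStar Ω n (n - 1))) ⧸
      (WA Ω n A).comap (LinearMap.range (betaStar Ω n (n - 1))).subtype) ∧
    (∀ W : Submodule (ZMod 2) (NSubsets Ω n → ZMod 2),
      W ≤ LinearMap.range (betaStar Ω n (n - 1)) →
      (∀ σ : Equiv.Perm Ω, (∀ a ∈ A, σ a = a) →
        ∀ f ∈ W, (fun w => f (permImage σ⁻¹ w)) ∈ W) →
      IsClosed (W : Set (NSubsets Ω n → ZMod 2)) →
      Finite ((LinearMap.range (betaStar Ω n (n - 1))) ⧸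
        W.comap (LinearMap.range (betaStar Ω n (n - 1))).subtype) →
      WA Ω n A ≤ W) := by
  refine ⟨LinearMap.map_le_range, fun _ hσ _ hf => WA_perm_invariant hσ hf, isClosed_WA,
    finite_quotient_WA, ?_⟩
  intro W _ hinv hW hfin
  obtain ⟨S, hS⟩ := Submodule.exists_finset_forall_eq_zero_imp_mem hW
    (P := LinearMap.range (betaStar Ω n (n - 1)))
  rintro _ ⟨g, hg, rfl⟩
  exact betaStar_mem_of_forall_subset_eq_zero hinv hS (mem_VA.mp hg)

/-- `W_A` is a `Sym(Ω∖A)`-invariant, topologically closed subspace of `Im β*_{n,n-1}`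
of finite index, and it is contained in every such subspace; hence it is the unique
minimal closed `Sym(Ω∖A)`-submodule of `Im β*_{n,n-1}` of finite index. -/
theorem WA_unique_minimal
    (Ω : Type) [Countable Ω] [Infinite Ω] [DecidableEq Ω] (n : ℕ) (hn : 1 ≤ n)
    (A : Finset Ω) :
    WA Ω n A ≤ LinearMap.range (betaStar Ω n (n - 1)) ∧
    (∀ σ : Equiv.Perm Ω, (∀ a ∈ A, σ a = a) →
      ∀ f ∈ WA Ω n A, (fun w => f (permImage σ⁻¹ w)) ∈ WA Ω n A) ∧
    IsClosed (WA Ω n A : Set (NSubsets Ω n → ZMod 2)) ∧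
    Finite ((LinearMap.range (betaStar Ω n (n - 1))) ⧸
      (WA Ω n A).comap (LinearMap.range (betaStar Ω n (n - 1))).subtype) ∧
    (∀ W : Submodule (ZMod 2) (NSubsets Ω n → ZMod 2),
      W ≤ LinearMap.range (betaStar Ω n (n - 1)) →
      (∀ σ : Equiv.Perm Ω, (∀ a ∈ A, σ a = a) →
        ∀ f ∈ W, (fun w => f (permImage σ⁻¹ w)) ∈ W) →
      IsClosed (W : Set (NSubsets Ω n → ZMod 2)) →
      Finite ((LinearMap.range (betaStar Ω n (n - 1))) ⧸
        W.comap (LinearMap.range (betaStar Ω n (n - 1))).subtype) →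
      WA Ω n A ≤ W) :=
  WA_unique_minimal_general Ω n A
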